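/- Let f ∈ ℂ[z_1,z_2] be a homogeneous polynomial of degree m. Writing f_j = ∂f/∂z_j and f_{jk} = ∂²f/∂z_j∂z_k, the polynomial identity (m−1)²·(2·f_{12}·f_1·f_2 − f_{11}·f_2² − f_{22}·f_1²) = (f_{12}² − f_{11}·f_{22})·(z_1²·f_{11} + 2·z_1·z_2·f_{12} + z_2²·f_{22}) holds. -/

import Mathlib

/-!
Euler's identity applied to `f₁` and `f₂`, which are homogeneous of degree `m - 1`, gives
`z₁f₁₁ + z₂f₁₂ = (m-1)f₁` and `z₁f₁₂ + z₂f₂₂ = (m-1)f₂`. Substituting these for `(m-1)f₁` and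
`(m-1)f₂` on the left turns the claim into a polynomial identity in `z₁, z₂, f₁₁, f₁₂, f₂₂`.
-/

open MvPolynomial

namespace MvPolynomial

variable {R σ : Type*}

theorem pderiv_pderiv_comm [CommSemiring R] (i j : σ) (f : MvPolynomial σ R) :
    pderiv i (pderiv j f) = pderiv j (pderiv i f) := by
  induction f using MvPolynomial.induction_on with
  | C a => simp only [pderiv_C, map_zero]
  | add p q hp hq => simp only [map_add, hp, hq]
  | mul_X p k hp =>
    classical
    simp only [pderiv_mul, map_add, pderiv_X, Pi.single_apply, hp]
    split_ifs <;> simp only [pderiv_one, map_zero, mul_zero, mul_one] <;> ring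

theorem IsHomogeneous.sum_X_mul_pderiv_pderiv [CommRing R] [Fintype σ] {f : MvPolynomial σ R}
    {m : ℕ} (hf : f.IsHomogeneous m) (j : σ) :
    ∑ i, X i * pderiv i (pderiv j f) = C ((m : R) - 1) * pderiv j f := by
  rcases m with _ | m
  · rw [← totalDegree_zero_iff_isHomogeneous, totalDegree_eq_zero_iff_eq_C] at hf
    rw [hf]
    simp only [pderiv_C, map_zero, mul_zero, Finset.sum_const_zero]
  · rw [(hf.pderiv (i := j)).sum_X_mul_pderiv, nsmul_eq_mul, ← C_eq_coe_nat]
    push_cast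
    ring_nf

end MvPolynomial

theorem hessian_identity_of_euler {R : Type*} [CommRing R] {k x y a b c p q : R}
    (h₁ : x * a + y * b = k * p) (h₂ : x * b + y * c = k * q) :
    k ^ 2 * (2 * b * p * q - a * q ^ 2 - c * p ^ 2) =
      (b ^ 2 - a * c) * (x ^ 2 * a + 2 * x * y * b + y ^ 2 * c) := by
  linear_combination (-(2 * b * k * q) + c * (k * p + x * a + y * b)) * h₁ +
    (-(2 * b * (x * a + y * b)) + a * (k * q + x * b + y * c)) * h₂

/-- For a homogeneous polynomial `f ∈ ℂ[z₁,z₂]` of degree `m`, the polynomial identity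
`(m−1)²·(2f₁₂f₁f₂ − f₁₁f₂² − f₂₂f₁²) = (f₁₂² − f₁₁f₂₂)·(z₁²f₁₁ + 2z₁z₂f₁₂ + z₂²f₂₂)`
holds, where `f_j = ∂f/∂z_j` and `f_{jk} = ∂²f/∂z_j∂z_k`. -/
theorem stmt_10 (m : ℕ) (f : MvPolynomial (Fin 2) ℂ) (hf : f.IsHomogeneous m) :
    MvPolynomial.C ((m : ℂ) - 1) ^ 2 *
        (2 * MvPolynomial.pderiv 0 (MvPolynomial.pderiv 1 f) * MvPolynomial.pderiv 0 f *
            MvPolynomial.pderiv 1 f -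
          MvPolynomial.pderiv 0 (MvPolynomial.pderiv 0 f) * MvPolynomial.pderiv 1 f ^ 2 -
          MvPolynomial.pderiv 1 (MvPolynomial.pderiv 1 f) * MvPolynomial.pderiv 0 f ^ 2) =
      (MvPolynomial.pderiv 0 (MvPolynomial.pderiv 1 f) ^ 2 -
          MvPolynomial.pderiv 0 (MvPolynomial.pderiv 0 f) *
            MvPolynomial.pderiv 1 (MvPolynomial.pderiv 1 f)) *
        (MvPolynomial.X 0 ^ 2 * MvPolynomial.pderiv 0 (MvPolynomial.pderiv 0 f) +
          2 * MvPolynomial.X 0 * MvPolynomial.X 1 *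
            MvPolynomial.pderiv 0 (MvPolynomial.pderiv 1 f) +
          MvPolynomial.X 1 ^ 2 * MvPolynomial.pderiv 1 (MvPolynomial.pderiv 1 f)) := by
  have euler₁ := hf.sum_X_mul_pderiv_pderiv 0
  have euler₂ := hf.sum_X_mul_pderiv_pderiv 1
  rw [Fin.sum_univ_two, pderiv_pderiv_comm 1 0] at euler₁
  rw [Fin.sum_univ_two] at euler₂
  exact hessian_identity_of_euler euler₁ euler₂
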